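/- Let L: ℕ → ℝ be a sequence with √n·L(n) → a·v > 0 as n → ∞ for constants a, v > 0, let (M_n) be a sequence with M_n → M > 0, and for ε > 0 define N(ε) = inf{n : L(n) ≤ ε·M_n}. Assume N(ε) → ∞ as ε → 0. Then ε·√(N(ε)) → a·v/M as ε → 0. -/

import Mathlib

/-!
If `N = N(ε)` is the first index with `L N ≤ ε M_N`, minimality gives `L (N - 1) > ε M_{N-1}`.
Multiplying both inequalities by `√N`, the quantity `ε √N` is squeezed between
`√N L N / M_N` and `√N L (N - 1) / M_{N-1}`. Both tend to `a v / M` as `N → ∞`, the second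
because `√N / √(N - 1) → 1`.
-/

open Filter Topology

lemma tendsto_sqrt_mul_pred {u : ℕ → ℝ} {c : ℝ}
    (hu : Tendsto (fun n : ℕ => √(n : ℝ) * u n) atTop (𝓝 c)) :
    Tendsto (fun n : ℕ => √(n : ℝ) * u (n - 1)) atTop (𝓝 c) := by
  have hratio : Tendsto (fun n : ℕ => √((n : ℝ) / (n + 1))) atTop (𝓝 1) := by
    simpa using (tendsto_natCast_div_add_atTop (1 : ℝ)).sqrt
  have hsucc : Tendsto (fun n : ℕ => √((n : ℝ) + 1) * u n) atTop (𝓝 c) := by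
    have hdiv := hu.div hratio one_ne_zero
    rw [div_one] at hdiv
    refine hdiv.congr' ?_
    filter_upwards [eventually_gt_atTop 0] with n hn
    have hn' : (0 : ℝ) < n := by exact_mod_cast hn
    rw [Pi.div_apply, Real.sqrt_div hn'.le]
    field_simp
  refine (tendsto_add_atTop_iff_nat 1).1 ?_
  simpa using hsucc

section FirstPassage

variable {L M : ℕ → ℝ} {ε : ℝ} {n : ℕ}

lemma sqrt_mul_div_le_of_eq_sInf (hn : n = sInf {k | L k ≤ ε * M k}) (hn0 : 0 < n)
    (hM : 0 < M n) : √(n : ℝ) * L n / M n ≤ ε * √(n : ℝ) := by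
  have hmem : L n ≤ ε * M n := by
    rw [hn]
    exact Nat.sInf_mem (Nat.nonempty_of_pos_sInf (hn ▸ hn0))
  rw [div_le_iff₀ hM]
  linarith [mul_le_mul_of_nonneg_left hmem (Real.sqrt_nonneg (n : ℝ))]

lemma le_sqrt_mul_div_pred_of_eq_sInf (hn : n = sInf {k | L k ≤ ε * M k}) (hn0 : 0 < n)
    (hM : 0 < M (n - 1)) : ε * √(n : ℝ) ≤ √(n : ℝ) * L (n - 1) / M (n - 1) := by
  have hnot : ε * M (n - 1) < L (n - 1) :=
    not_le.1 (Nat.notMem_of_lt_sInf ((Nat.sub_lt hn0 one_pos).trans_eq hn))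
  rw [le_div_iff₀ hM]
  linarith [mul_le_mul_of_nonneg_left hnot.le (Real.sqrt_nonneg (n : ℝ))]

end FirstPassage

theorem tendsto_mul_sqrt_sInf {L M : ℕ → ℝ} {c Mlim : ℝ} (hM : 0 < Mlim)
    (hL : Tendsto (fun n : ℕ => √(n : ℝ) * L n) atTop (𝓝 c)) (hMn : Tendsto M atTop (𝓝 Mlim))
    {l : Filter ℝ} {N : ℝ → ℕ} (hN : ∀ᶠ ε in l, N ε = sInf {n | L n ≤ ε * M n})
    (hNinf : Tendsto N l atTop) :
    Tendsto (fun ε => ε * √(N ε : ℝ)) l (𝓝 (c / Mlim)) := by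
  have hlower := (hL.div hMn hM.ne').comp hNinf
  have hupper :=
    ((tendsto_sqrt_mul_pred hL).div (hMn.comp (tendsto_sub_atTop_nat 1)) hM.ne').comp hNinf
  obtain ⟨n₀, hn₀⟩ := (hMn.eventually (eventually_gt_nhds hM)).exists_forall_of_atTop
  have hNlarge := hNinf.eventually (eventually_ge_atTop (n₀ + 1))
  refine tendsto_of_tendsto_of_tendsto_of_le_of_le' hlower hupper ?_ ?_
  · filter_upwards [hN, hNlarge] with ε hNε hlarge
    exact sqrt_mul_div_le_of_eq_sInf hNε (by omega) (hn₀ _ (by omega))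
  · filter_upwards [hN, hNlarge] with ε hNε hlarge
    exact le_sqrt_mul_div_pred_of_eq_sInf hNε (by omega) (hn₀ _ (by omega))

theorem stmt16_general (L M : ℕ → ℝ) (a v Mlim : ℝ)
    (hM : 0 < Mlim)
    (hL : Tendsto (fun n : ℕ => Real.sqrt n * L n) atTop (nhds (a * v)))
    (hMn : Tendsto M atTop (nhds Mlim))
    (N : ℝ → ℕ)
    (hN : ∀ ε : ℝ, 0 < ε → N ε = sInf {n : ℕ | L n ≤ ε * M n})
    (hNinf : Tendsto N (nhdsWithin 0 (Set.Ioi 0)) atTop) :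
    Tendsto (fun ε : ℝ => ε * Real.sqrt (N ε)) (nhdsWithin 0 (Set.Ioi 0))
      (nhds (a * v / Mlim)) :=
  tendsto_mul_sqrt_sInf hM hL hMn (eventually_nhdsWithin_of_forall hN) hNinf

/-- Deterministic core of the termination-rule analysis (proof of Theorem 5): if
`√n·L(n) → a·v > 0`, `M_n → M > 0`, `N(ε) = inf{n : L(n) ≤ ε·M_n}`, and `N(ε) → ∞` as
`ε → 0⁺`, then `ε·√(N(ε)) → a·v/M` as `ε → 0⁺`. -/
theorem stmt16 (L M : ℕ → ℝ) (a v Mlim : ℝ)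
    (ha : 0 < a) (hv : 0 < v) (hM : 0 < Mlim)
    (hL : Tendsto (fun n : ℕ => Real.sqrt n * L n) atTop (nhds (a * v)))
    (hMn : Tendsto M atTop (nhds Mlim))
    (N : ℝ → ℕ)
    (hN : ∀ ε : ℝ, 0 < ε → N ε = sInf {n : ℕ | L n ≤ ε * M n})
    (hNinf : Tendsto N (nhdsWithin 0 (Set.Ioi 0)) atTop) :
    Tendsto (fun ε : ℝ => ε * Real.sqrt (N ε)) (nhdsWithin 0 (Set.Ioi 0))
      (nhds (a * v / Mlim)) :=
  stmt16_general L M a v Mlim hM hL hMn N hN hNinf
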